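/- Consider the module M_{0,0} (the case α = 0, b = 0), i.e., the operators L_m(f,g) = (t^m D f, t^m(D+m/2)g) and G_m(f,g) = (−t^m g, t^m D f) on W. Then: (i) the pair (ℂ·1, {0}) is invariant for M_{0,0}, and every operator L_m and G_m vanishes on ℂ·1 × {0}; (ii) every invariant pair (S₀,S₁) with ℂ·1 ⊆ S₀ and (S₀,S₁) ≠ (ℂ·1, {0}) satisfies S₀ = P and S₁ = P. In particular, the quotient M_t = (ℂ[t,t⁻¹] ⊕ ξℂ[t,t⁻¹]) / (ℂ ⊕ ξ0) is an irreducible module over the N=1 Ramond algebra. -/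

import Mathlib

/- STATEMENT 9: For M_{0,0} (α = 0, b = 0), i.e. L_m(f,g) = (t^m D f, t^m(D+m/2)g),
G_m(f,g) = (−t^m g, t^m D f): (i) the pair (ℂ·1, {0}) is invariant and all operators
vanish on ℂ·1 × {0}; (ii) every invariant pair (S₀,S₁) with ℂ·1 ⊆ S₀ and
(S₀,S₁) ≠ (ℂ·1, {0}) satisfies S₀ = P and S₁ = P. In particular the quotient
M_t = (ℂ[t,t⁻¹] ⊕ ξℂ[t,t⁻¹])/(ℂ ⊕ ξ0) is an irreducible N=1 Ramond module. -/

open LaurentPolynomial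

noncomputable section

abbrev Lp := LaurentPolynomial ℂ

/-- `L_m(f,g) = (t^m(α+D+mb)f, t^m(α+D+m(b+1/2))g)` -/
def Lop (D : Lp →ₗ[ℂ] Lp) (α : Lp) (b : ℂ) (m : ℤ) : Lp × Lp → Lp × Lp :=
  fun w => (T m * (α * w.1 + D w.1 + ((m : ℂ) * b) • w.1),
            T m * (α * w.2 + D w.2 + ((m : ℂ) * (b + 1 / 2)) • w.2))

/-- `G_m(f,g) = (−t^m g, t^m(α+D+2mb)f)` -/
def Gop (D : Lp →ₗ[ℂ] Lp) (α : Lp) (b : ℂ) (m : ℤ) : Lp × Lp → Lp × Lp :=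
  fun w => (-(T m * w.2), T m * (α * w.1 + D w.1 + (2 * (m : ℂ) * b) • w.1))

/-- `(S₀, S₁)` is an invariant pair for `M_{α,b}`. -/
def RInv (D : Lp →ₗ[ℂ] Lp) (α : Lp) (b : ℂ) (S₀ S₁ : Submodule ℂ Lp) : Prop :=
  ∀ m : ℤ, ∀ f ∈ S₀, ∀ g ∈ S₁,
    (Lop D α b m (f, g)).1 ∈ S₀ ∧ (Lop D α b m (f, g)).2 ∈ S₁ ∧
    (Gop D α b m (f, g)).1 ∈ S₀ ∧ (Gop D α b m (f, g)).2 ∈ S₁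

/-!
`D` is diagonal on the monomials with pairwise distinct eigenvalues, so its kernel is `ℂ·1` and every
`D`-stable subspace is spanned by the monomials it contains. For an invariant pair with `1 ∈ S₀`,
`L₀(1, g) = (0, D g)` and `G₀(f, 0) = (0, D f)` make `S₁` a `D`-stable subspace containing `D S₀`,
so `S₁ = 0` forces `S₀ = ℂ·1`. Otherwise `S₁` contains some `t^p`, and
`L_{k-p}(1, t^p) = (0, ((p + k) / 2) t^k)` produces every `t^k` (via `t^{p+1}` when `k = -p`).
Finally `G₀(1, g) = (-g, 0)` gives `S₁ ⊆ S₀`.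
-/

section DiagonalOperator

variable {K : Type*} [Field K] {D : K[T;T⁻¹] →ₗ[K] K[T;T⁻¹]}

theorem coeff_T (n : ℤ) : (T n : K[T;T⁻¹]).coeff = Finsupp.single n 1 := rfl

theorem eq_coeff_smul_T_of_support_subset {f : K[T;T⁻¹]} {n : ℤ} (h : f.coeff.support ⊆ {n}) :
    f = f.coeff n • T n := by
  obtain ⟨c, hc⟩ := Finsupp.support_subset_singleton'.mp h
  ext k
  simp [hc, coeff_T, Finsupp.single_apply]

theorem eq_top_of_forall_T_mem {S : Submodule K K[T;T⁻¹]} (h : ∀ n : ℤ, T n ∈ S) : S = ⊤ := by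
  rw [eq_top_iff, ← (AddMonoidAlgebra.basis ℤ K).span_eq, Submodule.span_le]
  rintro _ ⟨n, rfl⟩
  exact h n

theorem coeff_apply_of_apply_T (hD : ∀ n : ℤ, D (T n) = (n : K) • T n) (f : K[T;T⁻¹]) (k : ℤ) :
    (D f).coeff k = k * f.coeff k := by
  let coeffAt : K[T;T⁻¹] →ₗ[K] K := Finsupp.lapply k ∘ₗ (AddMonoidAlgebra.basis ℤ K).repr
  suffices coeffAt ∘ₗ D = (k : K) • coeffAt from LinearMap.congr_fun this f
  refine (AddMonoidAlgebra.basis ℤ K).ext fun n => ?_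
  change (D (T n)).coeff k = k * (T n).coeff k
  by_cases h : n = k <;> simp [hD, coeff_T, h]

variable [CharZero K]

theorem ker_eq_span_one_of_apply_T (hD : ∀ n : ℤ, D (T n) = (n : K) • T n) :
    LinearMap.ker D = K ∙ 1 := by
  refine le_antisymm (fun f hf => ?_) ((Submodule.span_singleton_le_iff_mem _ _).mpr ?_)
  · have hsupp : f.coeff.support ⊆ {0} := fun j hj => by
      have hDf : (D f).coeff j = 0 := by rw [LinearMap.mem_ker.mp hf]; rfl
      rw [coeff_apply_of_apply_T hD] at hDf
      exact Finset.mem_singleton.mpr <| Int.cast_eq_zero.mp <|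
        (mul_eq_zero.mp hDf).resolve_right (Finsupp.mem_support_iff.mp hj)
    rw [eq_coeff_smul_T_of_support_subset hsupp, T_zero]
    exact Submodule.smul_mem _ _ (Submodule.mem_span_singleton_self 1)
  · rw [LinearMap.mem_ker, ← T_zero, hD, Int.cast_zero, zero_smul]

/-- `D - k` kills the coefficient at `k` and rescales the others by nonzero factors, so iterating it
isolates any single monomial. -/
theorem T_mem_of_coeff_ne_zero (hD : ∀ n : ℤ, D (T n) = (n : K) • T n)
    {S : Submodule K K[T;T⁻¹]} (hS : ∀ g ∈ S, D g ∈ S) {f : K[T;T⁻¹]} (hf : f ∈ S) {n : ℤ}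
    (hn : f.coeff n ≠ 0) : T n ∈ S := by
  induction hcard : f.coeff.support.card using Nat.strong_induction_on generalizing f with
  | _ N ih =>
  by_cases hsupp : f.coeff.support ⊆ {n}
  · rw [eq_coeff_smul_T_of_support_subset hsupp] at hf
    exact (S.smul_mem_iff hn).mp hf
  obtain ⟨k, hk, hkn⟩ := Finset.not_subset.mp hsupp
  rw [Finset.mem_singleton] at hkn
  have hcoeff (j : ℤ) : (D f - (k : K) • f).coeff j = (j - k) * f.coeff j := by
    rw [AddMonoidAlgebra.coeff_sub, AddMonoidAlgebra.coeff_smul, Finsupp.sub_apply,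
      Finsupp.smul_apply, coeff_apply_of_apply_T hD, smul_eq_mul, sub_mul]
  have hsub : (D f - (k : K) • f).coeff.support ⊂ f.coeff.support := by
    refine Finset.ssubset_iff_of_subset (fun j hj => ?_) |>.mpr ⟨k, hk, ?_⟩
    · rw [Finsupp.mem_support_iff, hcoeff] at hj
      exact Finsupp.mem_support_iff.mpr (right_ne_zero_of_mul hj)
    · rw [Finsupp.notMem_support_iff, hcoeff, sub_self, zero_mul]
  refine ih _ (hcard ▸ Finset.card_lt_card hsub) (S.sub_mem (hS f hf) (S.smul_mem _ hf)) ?_ rfl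
  rw [hcoeff]
  exact mul_ne_zero (sub_ne_zero.mpr (Int.cast_injective.ne (Ne.symm hkn))) hn

end DiagonalOperator

theorem Lop_zero_zero (D : Lp →ₗ[ℂ] Lp) (m : ℤ) (f g : Lp) :
    Lop D 0 0 m (f, g) = (T m * D f, T m * (D g + ((m : ℂ) / 2) • g)) := by
  simp [Lop, div_eq_mul_inv]

theorem Gop_zero_zero (D : Lp →ₗ[ℂ] Lp) (m : ℤ) (f g : Lp) :
    Gop D 0 0 m (f, g) = (-(T m * g), T m * D f) := by
  simp [Gop]

theorem rInv_span_one_bot (D : Lp →ₗ[ℂ] Lp) (hD : ∀ n : ℤ, D (T n) = (n : ℂ) • T n) :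
    RInv D 0 0 (ℂ ∙ 1) ⊥ := by
  intro m f hf g hg
  rw [← ker_eq_span_one_of_apply_T hD] at hf
  rw [(Submodule.mem_bot ℂ).mp hg, Lop_zero_zero, Gop_zero_zero, LinearMap.mem_ker.mp hf]
  simp

namespace RInv

variable {D : Lp →ₗ[ℂ] Lp} {S₀ S₁ : Submodule ℂ Lp}

theorem apply_mem_snd (h : RInv D 0 0 S₀ S₁) (h1 : (1 : Lp) ∈ S₀) {g : Lp} (hg : g ∈ S₁) :
    D g ∈ S₁ := by
  simpa [Lop_zero_zero, T_zero] using (h 0 1 h1 g hg).2.1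

theorem apply_mem_snd_of_mem_fst (h : RInv D 0 0 S₀ S₁) {f : Lp} (hf : f ∈ S₀) : D f ∈ S₁ := by
  simpa [Gop_zero_zero, T_zero] using (h 0 f hf 0 S₁.zero_mem).2.2.2

theorem snd_le_fst (h : RInv D 0 0 S₀ S₁) (h1 : (1 : Lp) ∈ S₀) : S₁ ≤ S₀ := fun g hg => by
  simpa [Gop_zero_zero, T_zero] using (h 0 1 h1 g hg).2.2.1

theorem fst_le_span_one (h : RInv D 0 0 S₀ S₁) (hD : ∀ n : ℤ, D (T n) = (n : ℂ) • T n)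
    (hS₁ : S₁ = ⊥) : S₀ ≤ ℂ ∙ 1 := fun f hf => by
  rw [← ker_eq_span_one_of_apply_T hD, LinearMap.mem_ker, ← Submodule.mem_bot ℂ, ← hS₁]
  exact h.apply_mem_snd_of_mem_fst hf

theorem T_mem_snd (h : RInv D 0 0 S₀ S₁) (hD : ∀ n : ℤ, D (T n) = (n : ℂ) • T n)
    (h1 : (1 : Lp) ∈ S₀) {p k : ℤ} (hp : T p ∈ S₁) (hpk : p + k ≠ 0) : T k ∈ S₁ := by
  have hL : (Lop D 0 0 (k - p) (1, T p)).2 = (((p + k : ℤ) : ℂ) / 2) • T k := by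
    rw [Lop_zero_zero, hD, ← add_smul, mul_smul_comm, ← T_add, sub_add_cancel]
    push_cast
    ring_nf
  have hmem := (h (k - p) 1 h1 (T p) hp).2.1
  rw [hL] at hmem
  exact (S₁.smul_mem_iff (div_ne_zero (Int.cast_ne_zero.mpr hpk) two_ne_zero)).mp hmem

theorem snd_eq_top (h : RInv D 0 0 S₀ S₁) (hD : ∀ n : ℤ, D (T n) = (n : ℂ) • T n)
    (h1 : (1 : Lp) ∈ S₀) (hS₁ : S₁ ≠ ⊥) : S₁ = ⊤ := by
  obtain ⟨g, hg, hg0⟩ := (Submodule.ne_bot_iff S₁).mp hS₁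
  obtain ⟨n, hn⟩ := Finsupp.support_nonempty_iff.mpr
    (AddMonoidAlgebra.coeff_eq_zero.not.mpr hg0)
  have hTn : T n ∈ S₁ :=
    T_mem_of_coeff_ne_zero hD (fun _ => h.apply_mem_snd h1) hg (Finsupp.mem_support_iff.mp hn)
  have hTn1 : T (n + 1) ∈ S₁ := h.T_mem_snd hD h1 hTn (by omega)
  refine eq_top_of_forall_T_mem fun k => ?_
  by_cases hk : n + k = 0
  · exact h.T_mem_snd hD h1 hTn1 (by omega)
  · exact h.T_mem_snd hD h1 hTn hk

end RInv

theorem stmt9 (D : Lp →ₗ[ℂ] Lp)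
    (hD : ∀ n : ℤ, D (T n) = (n : ℂ) • T n) :
    (RInv D 0 0 (Submodule.span ℂ {(1 : Lp)}) ⊥ ∧
      (∀ m : ℤ, ∀ f ∈ Submodule.span ℂ {(1 : Lp)},
        Lop D 0 0 m (f, 0) = 0 ∧ Gop D 0 0 m (f, 0) = 0)) ∧
    (∀ S₀ S₁ : Submodule ℂ Lp, RInv D 0 0 S₀ S₁ →
      Submodule.span ℂ {(1 : Lp)} ≤ S₀ →
      ¬(S₀ = Submodule.span ℂ {(1 : Lp)} ∧ S₁ = ⊥) →
      S₀ = ⊤ ∧ S₁ = ⊤) := by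
  refine ⟨⟨rInv_span_one_bot D hD, fun m f hf => ?_⟩, fun S₀ S₁ h hle hne => ?_⟩
  · rw [← ker_eq_span_one_of_apply_T hD, LinearMap.mem_ker] at hf
    simp [Lop_zero_zero, Gop_zero_zero, hf]
  · have h1 : (1 : Lp) ∈ S₀ := hle (Submodule.mem_span_singleton_self 1)
    have hS₁ : S₁ = ⊤ := h.snd_eq_top hD h1 fun hbot =>
      hne ⟨le_antisymm (h.fst_le_span_one hD hbot) hle, hbot⟩
    exact ⟨top_unique (hS₁ ▸ h.snd_le_fst h1), hS₁⟩

end
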